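/- Let t ≥ 2 and u ≥ 1 be integers and let a1, a2, a3, b be integers with a1·a2·a3 a unit of Z_{ut}. Let c be a coloring of Z_{ut} with no rainbow solution to eq(a1,a2,a3,b), and suppose there is a color 'yellow' not used by c. For i ∈ Z_t let P_i = { c(z) : z ∈ Z_{ut}, z ≡ i (mod t) } denote the palette of the residue class of i modulo t. Suppose there exists j ∈ Z_t such that |P_i \ P_j| ≤ 1 for every i ∈ Z_t. Then the coloring ĉ of Z_t defined by ĉ(i) = yellow if P_i ⊆ P_j, and ĉ(i) = the unique element of P_i \ P_j otherwise, is well-defined and has no rainbow solution to eq(a1,a2,a3,b) in Z_t. -/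

import Mathlib

/-!
Since a solution `s₁, s₂, s₃` in `ℤ_t` that is rainbow for `ĉ` has at most one yellow entry, and
the equation is invariant under rotating the pairs `(aᵢ, sᵢ)`, we may assume `ĉ(s₂)` and `ĉ(s₃)`
lie outside `P_j`. Lift `s₂, s₃` to `z₂, z₃` with `c(z₂) = ĉ(s₂)`, `c(z₃) = ĉ(s₃)`, and solve for
`z₁` using that `a₁` is a unit; then `z₁` lifts `s₁`. If `c(z₁) ∈ P_j` it differs from both colours
outside `P_j`; otherwise it is the unique colour of `P_{s₁} \ P_j`, namely `ĉ(s₁)`. Either way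
`z₁, z₂, z₃` is a rainbow solution for `c`.
-/

def Rainbow {α : Type*} (x y z : α) : Prop :=
  x ≠ y ∧ x ≠ z ∧ y ≠ z

theorem Rainbow.rotate {α : Type*} {x y z : α} (h : Rainbow x y z) : Rainbow y z x :=
  ⟨h.2.2, h.1.symm, h.2.1.symm⟩

def RainbowFree {R α : Type*} [Add R] [Mul R] (c : R → α) (a₁ a₂ a₃ b : R) : Prop :=
  ∀ s₁ s₂ s₃, a₁ * s₁ + a₂ * s₂ + a₃ * s₃ = b → ¬ Rainbow (c s₁) (c s₂) (c s₃)

theorem RainbowFree.rotate {R α : Type*} [AddCommSemigroup R] [Mul R] {c : R → α}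
    {a₁ a₂ a₃ b : R} (h : RainbowFree c a₁ a₂ a₃ b) : RainbowFree c a₂ a₃ a₁ b :=
  fun s₁ s₂ s₃ hs hr => h s₃ s₁ s₂ (by rw [← hs]; ac_rfl) hr.rotate.rotate

section Lift

variable {R S α : Type*} [CommRing R] [CommRing S] (φ : R →+* S)

theorem exists_lift_solution {a₁ a₂ a₃ b : R} (ha₁ : IsUnit a₁) (z₂ z₃ : R) {s₁ : S}
    (hs : φ a₁ * s₁ + φ a₂ * φ z₂ + φ a₃ * φ z₃ = φ b) :
    ∃ z₁, φ z₁ = s₁ ∧ a₁ * z₁ + a₂ * z₂ + a₃ * z₃ = b := by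
  set z₁ := ↑ha₁.unit⁻¹ * (b - a₂ * z₂ - a₃ * z₃)
  have hz : a₁ * z₁ + a₂ * z₂ + a₃ * z₃ = b := by
    rw [← mul_assoc, IsUnit.mul_val_inv, one_mul]; ring
  refine ⟨z₁, (ha₁.map φ).mul_left_cancel ?_, hz⟩
  have := congrArg φ hz
  simp only [map_add, map_mul] at this
  linear_combination this - hs

def palette (c : R → α) (i : S) : Set α :=
  c '' {z | φ z = i}

variable {φ} {c : R → α} {j : S} {cHat : S → α} {yellow : α}
  (hj : ∀ i, (palette φ c i \ palette φ c j).Subsingleton)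
  (hcHat₁ : ∀ i, palette φ c i ⊆ palette φ c j → cHat i = yellow)
  (hcHat₂ : ∀ i, ¬ palette φ c i ⊆ palette φ c j → cHat i ∈ palette φ c i \ palette φ c j)
include hcHat₁ hcHat₂

theorem exists_lift_color_eq_of_ne_yellow {s : S} (hs : cHat s ≠ yellow) :
    ∃ z, φ z = s ∧ c z = cHat s ∧ c z ∉ palette φ c j := by
  obtain ⟨⟨z, hz, hcz⟩, hnj⟩ := hcHat₂ s fun h => hs (hcHat₁ s h)
  exact ⟨z, hz, hcz, hcz ▸ hnj⟩

include hj

theorem not_rainbow_of_ne_yellow {a₁ a₂ a₃ b : R} (hrf : RainbowFree c a₁ a₂ a₃ b)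
    (ha₁ : IsUnit a₁) {s₁ s₂ s₃ : S} (hs : φ a₁ * s₁ + φ a₂ * s₂ + φ a₃ * s₃ = φ b)
    (h₂ : cHat s₂ ≠ yellow) (h₃ : cHat s₃ ≠ yellow) :
    ¬ Rainbow (cHat s₁) (cHat s₂) (cHat s₃) := by
  rintro ⟨h₁₂, h₁₃, h₂₃⟩
  obtain ⟨z₂, rfl, hc₂, hnj₂⟩ := exists_lift_color_eq_of_ne_yellow hcHat₁ hcHat₂ h₂
  obtain ⟨z₃, rfl, hc₃, hnj₃⟩ := exists_lift_color_eq_of_ne_yellow hcHat₁ hcHat₂ h₃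
  obtain ⟨z₁, rfl, hz⟩ := exists_lift_solution φ ha₁ z₂ z₃ hs
  apply hrf z₁ z₂ z₃ hz
  have hmem : c z₁ ∈ palette φ c (φ z₁) := ⟨z₁, rfl, rfl⟩
  by_cases hj₁ : c z₁ ∈ palette φ c j
  · exact ⟨fun h => hnj₂ (h ▸ hj₁), fun h => hnj₃ (h ▸ hj₁), hc₂ ▸ hc₃ ▸ h₂₃⟩
  · have hnot : ¬ palette φ c (φ z₁) ⊆ palette φ c j := fun h => hj₁ (h hmem)
    have hc₁ : c z₁ = cHat (φ z₁) := hj _ ⟨hmem, hj₁⟩ (hcHat₂ _ hnot)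
    exact ⟨hc₁ ▸ hc₂ ▸ h₁₂, hc₁ ▸ hc₃ ▸ h₁₃, hc₂ ▸ hc₃ ▸ h₂₃⟩

theorem RainbowFree.map {a₁ a₂ a₃ b : R} (hrf : RainbowFree c a₁ a₂ a₃ b)
    (ha₁ : IsUnit a₁) (ha₂ : IsUnit a₂) (ha₃ : IsUnit a₃) :
    RainbowFree cHat (φ a₁) (φ a₂) (φ a₃) (φ b) := by
  intro s₁ s₂ s₃ hs hr
  by_cases h₂ : cHat s₂ = yellow
  · refine not_rainbow_of_ne_yellow hj hcHat₁ hcHat₂ hrf.rotate ha₂ ?_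
      (h₂ ▸ hr.2.2.symm) (h₂ ▸ hr.1) hr.rotate
    linear_combination hs
  by_cases h₃ : cHat s₃ = yellow
  · refine not_rainbow_of_ne_yellow hj hcHat₁ hcHat₂ hrf.rotate.rotate ha₃ ?_
      (h₃ ▸ hr.2.1) h₂ hr.rotate.rotate
    linear_combination hs
  exact not_rainbow_of_ne_yellow hj hcHat₁ hcHat₂ hrf ha₁ hs h₂ h₃ hr

end Lift

theorem stmt_12_general (t u : ℕ) (a₁ a₂ a₃ b : ℤ)
    (ha : IsUnit ((a₁ * a₂ * a₃ : ℤ) : ZMod (u * t)))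
    (Color : Type) (c : ZMod (u * t) → Color) (yellow : Color)
    (hrf : ¬ ∃ s₁ s₂ s₃ : ZMod (u * t),
      (a₁ : ZMod (u * t)) * s₁ + a₂ * s₂ + a₃ * s₃ = b ∧
      c s₁ ≠ c s₂ ∧ c s₁ ≠ c s₃ ∧ c s₂ ≠ c s₃)
    (P : ZMod t → Set Color)
    (hP : ∀ i, P i = c '' {z | ZMod.castHom (dvd_mul_left t u) (ZMod t) z = i})
    (j : ZMod t) (hj : ∀ i, (P i \ P j).Subsingleton)
    (cHat : ZMod t → Color)
    (hcHat₁ : ∀ i, P i ⊆ P j → cHat i = yellow)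
    (hcHat₂ : ∀ i, ¬ P i ⊆ P j → cHat i ∈ P i \ P j) :
    (∀ i, ¬ P i ⊆ P j → ∃! x, x ∈ P i \ P j) ∧
    ¬ ∃ s₁ s₂ s₃ : ZMod t,
      (a₁ : ZMod t) * s₁ + a₂ * s₂ + a₃ * s₃ = b ∧
      cHat s₁ ≠ cHat s₂ ∧ cHat s₁ ≠ cHat s₃ ∧ cHat s₂ ≠ cHat s₃ := by
  set φ := ZMod.castHom (dvd_mul_left t u) (ZMod t)
  obtain rfl : P = palette φ c := funext hP
  refine ⟨fun i hi => ⟨cHat i, hcHat₂ i hi, fun x hx => hj i hx (hcHat₂ i hi)⟩, ?_⟩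
  obtain ⟨⟨ha₁, ha₂⟩, ha₃⟩ := by simpa only [Int.cast_mul, IsUnit.mul_iff] using ha
  have hfree := RainbowFree.map hj hcHat₁ hcHat₂
    (fun s₁ s₂ s₃ hs hr => hrf ⟨s₁, s₂, s₃, hs, hr⟩) ha₁ ha₂ ha₃
  simp only [map_intCast] at hfree
  exact fun ⟨s₁, s₂, s₃, hs, hr⟩ => hfree s₁ s₂ s₃ hs hr

theorem stmt_12 (t u : ℕ) (ht : 2 ≤ t) (hu : 1 ≤ u) (a₁ a₂ a₃ b : ℤ)
    (ha : IsUnit ((a₁ * a₂ * a₃ : ℤ) : ZMod (u * t)))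
    (Color : Type) (c : ZMod (u * t) → Color) (yellow : Color)
    (hyellow : ∀ z, c z ≠ yellow)
    (hrf : ¬ ∃ s₁ s₂ s₃ : ZMod (u * t),
      (a₁ : ZMod (u * t)) * s₁ + a₂ * s₂ + a₃ * s₃ = b ∧
      c s₁ ≠ c s₂ ∧ c s₁ ≠ c s₃ ∧ c s₂ ≠ c s₃)
    (P : ZMod t → Set Color)
    (hP : ∀ i, P i = c '' {z | ZMod.castHom (dvd_mul_left t u) (ZMod t) z = i})
    (j : ZMod t) (hj : ∀ i, (P i \ P j).Subsingleton)
    (cHat : ZMod t → Color)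
    (hcHat₁ : ∀ i, P i ⊆ P j → cHat i = yellow)
    (hcHat₂ : ∀ i, ¬ P i ⊆ P j → cHat i ∈ P i \ P j) :
    (∀ i, ¬ P i ⊆ P j → ∃! x, x ∈ P i \ P j) ∧
    ¬ ∃ s₁ s₂ s₃ : ZMod t,
      (a₁ : ZMod t) * s₁ + a₂ * s₂ + a₃ * s₃ = b ∧
      cHat s₁ ≠ cHat s₂ ∧ cHat s₁ ≠ cHat s₃ ∧ cHat s₂ ≠ cHat s₃ :=
  stmt_12_general t u a₁ a₂ a₃ b ha Color c yellow hrf P hP j hj cHat hcHat₁ hcHat₂
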